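/- Let f : {-1,1}^5 → {-1,1} be defined by f(x) = sgn(x_1 - 3x_2 + x_3 - x_4 + 3x_5). Then Φ_{2/5}(f) = 2689/6250. -/

import Mathlib

/-!
Since `∑_S ∏_{i∈S} x_i z_i = ∏_i (1 + x_i z_i)`, the multilinear extension is
`F(z) = 2^{-n} ∑_x f(x) ∏_i (1 + x_i z_i)`. Expanding this for `f5` gives its Fourier expansion
`F(z) = (z₁ - 2z₂ + z₃ - z₄ + 2z₅ + z₁z₃z₄ + z₁z₂z₅ + z₂z₃z₅ - z₂z₄z₅ + z₁z₂z₃z₄z₅) / 4`,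
and `Φ_{2/5}` is then the exact finite sum over the `3⁵` erasure patterns.
-/

open Finset

noncomputable section

/-- Sign function: `1` for positive arguments, `-1` otherwise. -/
def sgn (t : ℝ) : ℝ := if 0 < t then 1 else -1

/-- Real value of a Boolean sign: `true ↦ 1`, `false ↦ -1`. -/
def val (b : Bool) : ℝ := if b then 1 else -1

/-- Fourier coefficient `f̂(S) = 2^{-n} ∑_{x ∈ {-1,1}^n} f(x) ∏_{i∈S} x_i`. -/
def fCoeff (n : ℕ) (f : (Fin n → ℝ) → ℝ) (S : Finset (Fin n)) : ℝ :=
  (2 ^ n : ℝ)⁻¹ * ∑ b : Fin n → Bool, f (fun i => val (b i)) * ∏ i ∈ S, val (b i)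

/-- Multilinear extension `F(z) = ∑_S f̂(S) ∏_{i∈S} z_i`. -/
def mlin (n : ℕ) (f : (Fin n → ℝ) → ℝ) (z : Fin n → ℝ) : ℝ :=
  ∑ S : Finset (Fin n), fCoeff n f S * ∏ i ∈ S, z i

/-- Value of an erasure symbol: `0 ↦ 0`, `1 ↦ 1`, `2 ↦ -1`. -/
def eval3 (k : Fin 3) : ℝ := if k = 0 then 0 else if k = 1 then 1 else -1

/-- Erasure weight: `Pr[z_i = 0] = 1 - p`, `Pr[z_i = 1] = Pr[z_i = -1] = p/2`. -/
def wt (p : ℝ) (k : Fin 3) : ℝ := if k = 0 then 1 - p else p / 2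

/-- `Φ_p(f) = E_z |F(z)|` under the erasure distribution at rate `p`. -/
def Phi (n : ℕ) (p : ℝ) (f : (Fin n → ℝ) → ℝ) : ℝ :=
  ∑ e : Fin n → Fin 3, (∏ i, wt p (e i)) * |mlin n f (fun i => eval3 (e i))|

/-- `f(x) = sgn(x₁ - 3x₂ + x₃ - x₄ + 3x₅)`. -/
def f5 (x : Fin 5 → ℝ) : ℝ := sgn (x 0 - 3 * x 1 + x 2 - x 3 + 3 * x 4)

/-- `Maj₅(x) = sgn(x₁ + x₂ + x₃ + x₄ + x₅)`. -/
def maj5 (x : Fin 5 → ℝ) : ℝ := sgn (x 0 + x 1 + x 2 + x 3 + x 4)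

theorem Fin.sum_univ_pi_succ {α M : Type*} [Fintype α] [AddCommMonoid M] {n : ℕ}
    (g : (Fin (n + 1) → α) → M) :
    ∑ e, g e = ∑ a, ∑ e : Fin n → α, g (Fin.cons a e) := by
  rw [← (Fin.consEquiv fun _ => α).sum_comp, Fintype.sum_prod_type]
  rfl

theorem Fin.sum_univ_pi_five {α M : Type*} [Fintype α] [AddCommMonoid M]
    (g : (Fin 5 → α) → M) :
    ∑ e, g e = ∑ a, ∑ b, ∑ c, ∑ d, ∑ e, g ![a, b, c, d, e] := by
  simp only [Fin.sum_univ_pi_succ, Fintype.sum_unique]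
  rfl

theorem mlin_eq_sum_mul_prod_one_add (n : ℕ) (f : (Fin n → ℝ) → ℝ) (z : Fin n → ℝ) :
    mlin n f z = (2 ^ n : ℝ)⁻¹ *
      ∑ b : Fin n → Bool, f (fun i => val (b i)) * ∏ i, (1 + val (b i) * z i) := by
  simp only [mlin, fCoeff, prod_one_add, powerset_univ, mul_sum, sum_mul, prod_mul_distrib]
  rw [sum_comm]
  simp only [mul_assoc]

theorem mlin_f5 (z : Fin 5 → ℝ) : mlin 5 f5 z =
    (z 0 - 2 * z 1 + z 2 - z 3 + 2 * z 4 + z 0 * z 2 * z 3 + z 0 * z 1 * z 4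
      + z 1 * z 2 * z 4 - z 1 * z 3 * z 4 + z 0 * z 1 * z 2 * z 3 * z 4) / 4 := by
  rw [mlin_eq_sum_mul_prod_one_add, Fin.sum_univ_pi_five]
  simp only [Fintype.sum_bool, f5, sgn, _root_.val, Fin.prod_univ_five, Matrix.cons_val_zero,
    Matrix.cons_val_one, Matrix.cons_val_two, Matrix.cons_val_three, Matrix.cons_val_four,
    if_true, Bool.false_eq_true, if_false]
  norm_num
  ring

theorem eval3_zero : eval3 0 = 0 := rfl
theorem eval3_one : eval3 1 = 1 := rfl
theorem eval3_two : eval3 2 = -1 := rfl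
theorem wt_zero (p : ℝ) : wt p 0 = 1 - p := rfl
theorem wt_one (p : ℝ) : wt p 1 = p / 2 := rfl
theorem wt_two (p : ℝ) : wt p 2 = p / 2 := rfl

theorem stmt1 : Phi 5 (2/5) f5 = 2689 / 6250 := by
  rw [Phi, Fin.sum_univ_pi_five]
  simp only [mlin_f5, Fin.sum_univ_three, Fin.prod_univ_five, Matrix.cons_val_zero,
    Matrix.cons_val_one, Matrix.head_cons, Matrix.tail_cons, Matrix.cons_val_two,
    Matrix.cons_val_three, Matrix.cons_val_four, eval3_zero, eval3_one, eval3_two,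
    wt_zero, wt_one, wt_two]
  norm_num
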